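/- Let λ ≠ 0 and let u, s : ℝ⁴ → ℝ be smooth functions of (t,x,y,z) such that u satisfies u_{ty} = u_z u_{xy} − u_y u_{xz} and s satisfies s_y = λ(u_y s_x − u_{xy} s) and s_z = λ(u_z s_x − s_t − u_{xz} s). Then U = s satisfies the linearization of the Martínez Alonso–Shabat equation: s_{ty} = u_z s_{xy} − u_y s_{xz} + u_{xy} s_z − u_{xz} s_y. -/

import Mathlib

/-- Partial derivative of `f : (Fin n → ℝ) → ℝ` in the `i`-th coordinate direction. -/
noncomputable def pd (n : ℕ) (i : Fin n) (f : (Fin n → ℝ) → ℝ) : (Fin n → ℝ) → ℝ :=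
  fun p => fderiv ℝ f p (Pi.single i 1)

section aux

variable {n : ℕ} {f g : (Fin n → ℝ) → ℝ}

lemma pd_contDiff (i : Fin n) (hf : ContDiff ℝ (⊤ : ℕ∞) f) : ContDiff ℝ (⊤ : ℕ∞) (pd n i f) := by
  have h : ContDiff ℝ (⊤ : ℕ∞) (fderiv ℝ f) := hf.fderiv_right (by simp)
  exact h.clm_apply contDiff_const

lemma pd_differentiable (i : Fin n) (hf : ContDiff ℝ (⊤ : ℕ∞) f) : Differentiable ℝ (pd n i f) :=
  (pd_contDiff i hf).differentiable (by simp)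

lemma pd_comm (i j : Fin n) (hf : ContDiff ℝ (⊤ : ℕ∞) f) (p : Fin n → ℝ) :
    pd n i (pd n j f) p = pd n j (pd n i f) p := by
  have hdf : ContDiff ℝ (⊤ : ℕ∞) (fderiv ℝ f) := hf.fderiv_right (by simp)
  have hda : ∀ q, DifferentiableAt ℝ (fderiv ℝ f) q := fun q =>
    (hdf.differentiable (by simp)) q
  have key : ∀ (v w : Fin n → ℝ),
      fderiv ℝ (fun q => fderiv ℝ f q v) p w = fderiv ℝ (fderiv ℝ f) p w v := by
    intro v w
    have := fderiv_clm_apply (hda p) (differentiableAt_const v)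
    rw [show (fun q => fderiv ℝ f q v) = (fun q => (fderiv ℝ f q) ((fun _ => v) q)) from rfl,
      this]
    simp
  have hsym : IsSymmSndFDerivAt ℝ f p := by
    refine ContDiffAt.isSymmSndFDerivAt (hf.contDiffAt) ?_
    rw [minSmoothness_of_isRCLikeNormedField]
    exact WithTop.coe_le_coe.mpr (le_top : (2 : ℕ∞) ≤ ⊤)
  have := hsym.eq (Pi.single i 1) (Pi.single j 1)
  show fderiv ℝ (fun q => fderiv ℝ f q (Pi.single j 1)) p (Pi.single i 1)
      = fderiv ℝ (fun q => fderiv ℝ f q (Pi.single i 1)) p (Pi.single j 1)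
  rw [key, key, this]

lemma pd_const_mul (i : Fin n) (c : ℝ) (hf : Differentiable ℝ f) (p : Fin n → ℝ) :
    pd n i (fun q => c * f q) p = c * pd n i f p := by
  simp [pd, fderiv_const_mul (hf p) c]

lemma pd_mul (i : Fin n) (hf : Differentiable ℝ f) (hg : Differentiable ℝ g) (p : Fin n → ℝ) :
    pd n i (fun q => f q * g q) p = pd n i f p * g p + f p * pd n i g p := by
  simp [pd, fderiv_fun_mul (hf p) (hg p)]; ring

lemma pd_sub (i : Fin n) (hf : Differentiable ℝ f) (hg : Differentiable ℝ g) (p : Fin n → ℝ) :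
    pd n i (fun q => f q - g q) p = pd n i f p - pd n i g p := by
  simp [pd, fderiv_fun_sub (hf p) (hg p)]

end aux

/-- 4D coordinates `(t,x,y,z) = (0,1,2,3)`. A pseudopotential `s` of the covering
`s_y = λ(u_y s_x − u_xy s)`, `s_z = λ(u_z s_x − s_t − u_xz s)` over the Martínez
Alonso–Shabat equation satisfies the linearized equation, i.e. is a shadow. -/
theorem stmt_8 (u s : (Fin 4 → ℝ) → ℝ) (hu : ContDiff ℝ (⊤ : ℕ∞) u) (hs : ContDiff ℝ (⊤ : ℕ∞) s)
    (lam : ℝ) (hlam : lam ≠ 0)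
    (hMASh : ∀ p, pd 4 2 (pd 4 0 u) p
        = pd 4 3 u p * pd 4 2 (pd 4 1 u) p - pd 4 2 u p * pd 4 3 (pd 4 1 u) p)
    (h1 : ∀ p, pd 4 2 s p
        = lam * (pd 4 2 u p * pd 4 1 s p - pd 4 2 (pd 4 1 u) p * s p))
    (h2 : ∀ p, pd 4 3 s p
        = lam * (pd 4 3 u p * pd 4 1 s p - pd 4 0 s p - pd 4 3 (pd 4 1 u) p * s p)) :
    ∀ p, pd 4 2 (pd 4 0 s) p
        = pd 4 3 u p * pd 4 2 (pd 4 1 s) p - pd 4 2 u p * pd 4 3 (pd 4 1 s) p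
          + pd 4 2 (pd 4 1 u) p * pd 4 3 s p - pd 4 3 (pd 4 1 u) p * pd 4 2 s p := by
  intro p
  -- differentiability facts
  have hud : Differentiable ℝ u := hu.differentiable (by simp)
  have hsd : Differentiable ℝ s := hs.differentiable (by simp)
  have hxu : ContDiff ℝ (⊤ : ℕ∞) (pd 4 1 u) := pd_contDiff 1 hu
  have d0s : Differentiable ℝ (pd 4 0 s) := pd_differentiable 0 hs
  have d1s : Differentiable ℝ (pd 4 1 s) := pd_differentiable 1 hs
  have d2u : Differentiable ℝ (pd 4 2 u) := pd_differentiable 2 hu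
  have d3u : Differentiable ℝ (pd 4 3 u) := pd_differentiable 3 hu
  have d21u : Differentiable ℝ (pd 4 2 (pd 4 1 u)) := pd_differentiable 2 hxu
  have d31u : Differentiable ℝ (pd 4 3 (pd 4 1 u)) := pd_differentiable 3 hxu
  -- rewrite h1, h2 as function equalities
  have H1 : pd 4 2 s = fun q => lam * (pd 4 2 u q * pd 4 1 s q - pd 4 2 (pd 4 1 u) q * s q) :=
    funext h1
  have H2 : pd 4 3 s = fun q => lam *
      (pd 4 3 u q * pd 4 1 s q - pd 4 0 s q - pd 4 3 (pd 4 1 u) q * s q) := funext h2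
  -- apply pd 3 to H1
  have A : pd 4 3 (pd 4 2 s) p
      = lam * (pd 4 3 (pd 4 2 u) p * pd 4 1 s p + pd 4 2 u p * pd 4 3 (pd 4 1 s) p
          - (pd 4 3 (pd 4 2 (pd 4 1 u)) p * s p + pd 4 2 (pd 4 1 u) p * pd 4 3 s p)) := by
    rw [H1]
    rw [pd_const_mul 3 lam (f := fun q => pd 4 2 u q * pd 4 1 s q - pd 4 2 (pd 4 1 u) q * s q) (((d2u.mul d1s).sub (d21u.mul hsd)))]
    rw [pd_sub 3 (f := fun q => pd 4 2 u q * pd 4 1 s q) (g := fun q => pd 4 2 (pd 4 1 u) q * s q) (d2u.mul d1s) (d21u.mul hsd)]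
    rw [pd_mul 3 d2u d1s, pd_mul 3 d21u hsd]
  -- apply pd 2 to H2
  have B : pd 4 2 (pd 4 3 s) p
      = lam * (pd 4 2 (pd 4 3 u) p * pd 4 1 s p + pd 4 3 u p * pd 4 2 (pd 4 1 s) p
          - pd 4 2 (pd 4 0 s) p
          - (pd 4 2 (pd 4 3 (pd 4 1 u)) p * s p + pd 4 3 (pd 4 1 u) p * pd 4 2 s p)) := by
    rw [H2]
    rw [pd_const_mul 2 lam (f := fun q => pd 4 3 u q * pd 4 1 s q - pd 4 0 s q - pd 4 3 (pd 4 1 u) q * s q) (((d3u.mul d1s).sub d0s).sub (d31u.mul hsd))]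
    rw [pd_sub 2 (f := fun q => pd 4 3 u q * pd 4 1 s q - pd 4 0 s q) (g := fun q => pd 4 3 (pd 4 1 u) q * s q) ((d3u.mul d1s).sub d0s) (d31u.mul hsd)]
    rw [pd_sub 2 (f := fun q => pd 4 3 u q * pd 4 1 s q) (g := pd 4 0 s) (d3u.mul d1s) d0s]
    rw [pd_mul 2 d3u d1s, pd_mul 2 d31u hsd]
  -- symmetry of second derivatives
  have c1 : pd 4 2 (pd 4 3 s) p = pd 4 3 (pd 4 2 s) p := pd_comm 2 3 hs p
  have c2 : pd 4 2 (pd 4 3 u) p = pd 4 3 (pd 4 2 u) p := pd_comm 2 3 hu p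
  have c3 : pd 4 2 (pd 4 3 (pd 4 1 u)) p = pd 4 3 (pd 4 2 (pd 4 1 u)) p := pd_comm 2 3 hxu p
  rw [c1, c2, c3] at B
  rw [A] at B
  have := mul_left_cancel₀ hlam (B.symm)
  linarith [this]
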